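/- For a pure state ρ on H₁⊗H₂ with dim H₁ = d₁ ≤ d₂ = dim H₂, the exact identity ‖T^{(12)}‖² = 4(d₂²−1)/d₂² − (2(d₁+d₂)/(d₁d₂))‖T^{(2)}‖² holds, where T^{(2)} is the local Bloch vector of the second subsystem. -/

import Mathlib

/-!
With `λ₀ = 1`, the family `{λ₀, λᵢ}` is a basis of the matrices, orthogonal for
`(A, B) ↦ tr (A B)`, so Parseval gives `tr ρ₁² = 1/d₁ + ‖T¹‖²/2`, `tr ρ₂² = 1/d₂ + ‖T²‖²/2`
and, for the product basis, `1 = tr ρ² = 1/(d₁d₂) + ‖T¹‖²/(2d₂) + ‖T²‖²/(2d₁) + ‖T¹²‖²/4`.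
An idempotent of trace one has rank one, `ρ = u vᵀ`; reshaping `u`, `v` into `d₁ × d₂` matrices
`U`, `V` gives `ρ₁ = U Vᵀ` and `ρ₂ = Uᵀ V`, which have the same purity. Eliminating `‖T¹‖²`
yields the identity over `ℂ`; as `ρ` and the `λᵢ` are Hermitian, the Bloch coordinates are real.
-/

open Matrix BigOperators
open scoped Kronecker ComplexOrder

namespace Matrix

section Rank

variable {K m n : Type*} [Field K]

theorem rank_eq_trace_of_isIdempotentElem [Fintype n] [DecidableEq n] {A : Matrix n n K}
    (hA : IsIdempotentElem A) : (A.rank : K) = A.trace := by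
  have hlin : IsIdempotentElem A.toLin' := hA.map Matrix.toLinAlgEquiv'
  rw [← Matrix.trace_toLin'_eq, (LinearMap.IsIdempotentElem.isProj_range _ hlin).trace]
  rfl

theorem exists_eq_vecMulVec_of_rank_le_one [Fintype n] {A : Matrix m n K} (hA : A.rank ≤ 1) :
    ∃ u v, A = vecMulVec u v := by
  classical
  rw [Matrix.rank, finrank_le_one_iff] at hA
  obtain ⟨⟨u, _⟩, hspan⟩ := hA
  choose v hv using fun j => hspan ⟨A.mulVecLin (Pi.single j 1), LinearMap.mem_range_self _ _⟩
  refine ⟨u, v, Matrix.ext fun i j => ?_⟩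
  simpa [vecMulVec_apply, mul_comm] using (congr_fun (congrArg Subtype.val (hv j)) i).symm

theorem exists_eq_vecMulVec_of_isIdempotentElem [CharZero K] [Fintype n] [DecidableEq n]
    {A : Matrix n n K} (hA : IsIdempotentElem A) (htr : A.trace = 1) :
    ∃ u v, A = vecMulVec u v := by
  refine exists_eq_vecMulVec_of_rank_le_one (le_of_eq ?_)
  exact_mod_cast (rank_eq_trace_of_isIdempotentElem hA).trans htr

end Rank

section PartialTrace

variable {R m n : Type*} [Fintype m] [Fintype n]

/-- Tracing out the second factor gives the reduced state `ρ₁`; `partialTraceFst` gives `ρ₂`. -/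
def partialTraceSnd [AddCommMonoid R] (ρ : Matrix (m × n) (m × n) R) : Matrix m m R :=
  of fun i i' => ∑ j, ρ (i, j) (i', j)

def partialTraceFst [AddCommMonoid R] (ρ : Matrix (m × n) (m × n) R) : Matrix n n R :=
  of fun j j' => ∑ i, ρ (i, j) (i, j')

theorem trace_partialTraceSnd [AddCommMonoid R] (ρ : Matrix (m × n) (m × n) R) :
    ρ.partialTraceSnd.trace = ρ.trace := by
  simp [trace, partialTraceSnd, Fintype.sum_prod_type]

theorem trace_partialTraceFst [AddCommMonoid R] (ρ : Matrix (m × n) (m × n) R) :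
    ρ.partialTraceFst.trace = ρ.trace := by
  simp [trace, partialTraceFst, Fintype.sum_prod_type, Finset.sum_comm (γ := n)]

theorem trace_mul_kronecker_one [Semiring R] [DecidableEq n] (ρ : Matrix (m × n) (m × n) R)
    (A : Matrix m m R) :
    (ρ * (A ⊗ₖ (1 : Matrix n n R))).trace = (ρ.partialTraceSnd * A).trace := by
  simp only [trace, diag_apply, mul_apply, kroneckerMap_apply, one_apply, mul_ite, mul_one,
    mul_zero, Fintype.sum_prod_type, Finset.sum_ite_eq', Finset.mem_univ, if_true, partialTraceSnd,
    of_apply, Finset.sum_mul]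
  exact Finset.sum_congr rfl fun _ _ => Finset.sum_comm

theorem trace_mul_one_kronecker [Semiring R] [DecidableEq m] (ρ : Matrix (m × n) (m × n) R)
    (B : Matrix n n R) :
    (ρ * ((1 : Matrix m m R) ⊗ₖ B)).trace = (ρ.partialTraceFst * B).trace := by
  simp only [trace, diag_apply, mul_apply, kroneckerMap_apply, one_apply, ite_mul, one_mul,
    zero_mul, mul_ite, mul_zero, Fintype.sum_prod_type, Finset.sum_ite_irrel, Finset.sum_const_zero,
    Finset.sum_ite_eq', Finset.mem_univ, if_true, partialTraceFst, of_apply, Finset.sum_mul]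
  rw [Finset.sum_comm]
  exact Finset.sum_congr rfl fun _ _ => Finset.sum_comm

omit [Fintype m] in
theorem partialTraceSnd_vecMulVec [CommSemiring R] (u v : m × n → R) :
    (vecMulVec u v).partialTraceSnd = of (Function.curry u) * (of (Function.curry v))ᵀ := by
  ext i i'
  simp [partialTraceSnd, vecMulVec_apply, mul_apply]

omit [Fintype n] in
theorem partialTraceFst_vecMulVec [CommSemiring R] (u v : m × n → R) :
    (vecMulVec u v).partialTraceFst = (of (Function.curry u))ᵀ * of (Function.curry v) := by
  ext j j'
  simp [partialTraceFst, vecMulVec_apply, mul_apply]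

theorem trace_partialTraceSnd_mul_self_of_vecMulVec [CommSemiring R] (u v : m × n → R) :
    ((vecMulVec u v).partialTraceSnd * (vecMulVec u v).partialTraceSnd).trace =
      ((vecMulVec u v).partialTraceFst * (vecMulVec u v).partialTraceFst).trace := by
  rw [partialTraceSnd_vecMulVec, partialTraceFst_vecMulVec]
  conv_rhs => rw [← Matrix.trace_transpose]
  simp only [transpose_mul, transpose_transpose, Matrix.mul_assoc]
  rw [Matrix.trace_mul_comm]
  simp only [Matrix.mul_assoc]

end PartialTrace

section TraceOrthogonal

variable {K n ι : Type*} [Field K] [Fintype n] [DecidableEq ι]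

theorem trace_mul_sum_smul_of_trace_mul_eq_ite [Fintype ι] {f : ι → Matrix n n K} {c : ι → K}
    (horth : ∀ i j, (f i * f j).trace = if i = j then c i else 0) (a : ι → K) (j : ι) :
    ((∑ i, a i • f i) * f j).trace = a j * c j := by
  simp [Finset.sum_mul, trace_sum, horth]

theorem linearIndependent_of_trace_mul_eq_ite [Fintype ι] {f : ι → Matrix n n K} {c : ι → K}
    (hc : ∀ i, c i ≠ 0) (horth : ∀ i j, (f i * f j).trace = if i = j then c i else 0) :
    LinearIndependent K f := by
  refine Fintype.linearIndependent_iff.mpr fun a ha j => ?_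
  have := trace_mul_sum_smul_of_trace_mul_eq_ite horth a j
  rw [ha, Matrix.zero_mul, trace_zero] at this
  exact (mul_eq_zero.mp this.symm).resolve_right (hc j)

theorem trace_mul_self_eq_sum_of_trace_mul_eq_ite [Fintype ι] [DecidableEq n]
    {f : ι → Matrix n n K} {c : ι → K}
    (hc : ∀ i, c i ≠ 0) (horth : ∀ i j, (f i * f j).trace = if i = j then c i else 0)
    (hcard : Fintype.card ι = Fintype.card n ^ 2) (X : Matrix n n K) :
    (X * X).trace = ∑ i, (X * f i).trace ^ 2 / c i := by
  have hspan := (linearIndependent_of_trace_mul_eq_ite hc horth).span_eq_top_of_card_eq_finrank'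
    (by rw [hcard, Module.finrank_matrix, Module.finrank_self, mul_one, sq])
  obtain ⟨a, rfl⟩ := (Submodule.mem_span_range_iff_exists_fun K).mp
    (hspan ▸ Submodule.mem_top : X ∈ Submodule.span K (Set.range f))
  have hcoeff : ∀ i, ((∑ j, a j • f j) * f i).trace = a i * c i :=
    trace_mul_sum_smul_of_trace_mul_eq_ite horth a
  calc ((∑ i, a i • f i) * ∑ i, a i • f i).trace
      = ∑ i, a i * ((∑ j, a j • f j) * f i).trace := by
        simp [Matrix.mul_sum, trace_sum]
    _ = ∑ i, ((∑ j, a j • f j) * f i).trace ^ 2 / c i := by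
        refine Finset.sum_congr rfl fun i _ => ?_
        rw [hcoeff]
        field_simp [hc i]

theorem trace_mul_eq_ite_kronecker {m κ : Type*} [Fintype m] [DecidableEq κ]
    {f : ι → Matrix n n K} {c : ι → K} {g : κ → Matrix m m K} {e : κ → K}
    (hf : ∀ i j, (f i * f j).trace = if i = j then c i else 0)
    (hg : ∀ i j, (g i * g j).trace = if i = j then e i else 0) (p q : ι × κ) :
    ((f p.1 ⊗ₖ g p.2) * (f q.1 ⊗ₖ g q.2)).trace = if p = q then c p.1 * e p.2 else 0 := by
  rw [← mul_kronecker_mul, trace_kronecker, hf, hg]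
  by_cases h1 : p.1 = q.1 <;> by_cases h2 : p.2 = q.2 <;> simp [Prod.ext_iff, h1, h2]

theorem trace_mul_eq_ite_optionElim [DecidableEq n] {f : ι → Matrix n n K} {c : ι → K}
    (htr : ∀ i, (f i).trace = 0) (horth : ∀ i j, (f i * f j).trace = if i = j then c i else 0)
    (a b : Option ι) :
    (a.elim 1 f * b.elim 1 f).trace = if a = b then a.elim (Fintype.card n : K) c else 0 := by
  cases a <;> cases b <;> simp [htr, horth]

end TraceOrthogonal

end Matrix

/-- Generalised Gell-Mann matrices: with `1` adjoined, a basis of `Matrix n n K` (by the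
cardinality condition) that is orthogonal for `(A, B) ↦ tr (A * B)`. -/
structure IsBlochBasis {K n ι : Type*} [Field K] [Fintype n] [Fintype ι] [DecidableEq ι]
    (lam : ι → Matrix n n K) : Prop where
  trace_eq_zero : ∀ i, (lam i).trace = 0
  trace_mul : ∀ i j, (lam i * lam j).trace = if i = j then 2 else 0
  card_add_one : Fintype.card ι + 1 = Fintype.card n ^ 2

namespace IsBlochBasis

variable {K m n ι κ : Type*} [Field K] [Fintype m] [Fintype n] [DecidableEq m] [DecidableEq n]
  [Fintype ι] [Fintype κ] [DecidableEq ι] [DecidableEq κ]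
  {lam : ι → Matrix m m K} {mu : κ → Matrix n n K}

theorem trace_mul_eq_ite_optionElim (h : IsBlochBasis lam) (a b : Option ι) :
    (a.elim 1 lam * b.elim 1 lam).trace =
      if a = b then a.elim (Fintype.card m : K) (fun _ => 2) else 0 :=
  Matrix.trace_mul_eq_ite_optionElim h.trace_eq_zero h.trace_mul a b

variable [CharZero K]

omit [DecidableEq m] in
theorem card_ne_zero (h : IsBlochBasis lam) : (Fintype.card m : K) ≠ 0 :=
  Nat.cast_ne_zero.mpr fun h0 => by simpa [h0] using h.card_add_one

omit [DecidableEq m] in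
theorem optionElim_ne_zero (h : IsBlochBasis lam) (a : Option ι) :
    a.elim (Fintype.card m : K) (fun _ => 2) ≠ 0 := by
  cases a <;> simp [h.card_ne_zero]

theorem trace_mul_self (h : IsBlochBasis lam) (X : Matrix m m K) :
    (X * X).trace = X.trace ^ 2 / Fintype.card m + (∑ i, (X * lam i).trace ^ 2) / 2 := by
  rw [trace_mul_self_eq_sum_of_trace_mul_eq_ite h.optionElim_ne_zero h.trace_mul_eq_ite_optionElim
    (by simp [h.card_add_one])]
  simp [Fintype.sum_option, Finset.sum_div]

theorem trace_mul_self_kronecker (h : IsBlochBasis lam) (h' : IsBlochBasis mu)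
    (ρ : Matrix (m × n) (m × n) K) :
    (ρ * ρ).trace = ρ.trace ^ 2 / (Fintype.card m * Fintype.card n)
      + (∑ i, (ρ * (lam i ⊗ₖ 1)).trace ^ 2) / (2 * Fintype.card n)
      + (∑ j, (ρ * (1 ⊗ₖ mu j)).trace ^ 2) / (2 * Fintype.card m)
      + (∑ i, ∑ j, (ρ * (lam i ⊗ₖ mu j)).trace ^ 2) / 4 := by
  have horth := trace_mul_eq_ite_kronecker h.trace_mul_eq_ite_optionElim
    h'.trace_mul_eq_ite_optionElim
  have hcard : Fintype.card (Option ι × Option κ) = Fintype.card (m × n) ^ 2 := by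
    rw [Fintype.card_prod, Fintype.card_option, Fintype.card_option, h.card_add_one,
      h'.card_add_one, Fintype.card_prod, mul_pow]
  rw [trace_mul_self_eq_sum_of_trace_mul_eq_ite
    (fun p => mul_ne_zero (h.optionElim_ne_zero p.1) (h'.optionElim_ne_zero p.2)) horth hcard ρ]
  simp only [Fintype.sum_prod_type, Fintype.sum_option, Option.elim_none, Option.elim_some,
    ← Finset.sum_div, Finset.sum_add_distrib, zero_mul, mul_zero, mul_one, implies_true,
    kroneckerMap_one_one]
  ring

theorem sum_sq_trace_mul_kronecker_of_isIdempotentElem (h : IsBlochBasis lam)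
    (h' : IsBlochBasis mu) {ρ : Matrix (m × n) (m × n) K} (hpure : IsIdempotentElem ρ)
    (htr : ρ.trace = 1) :
    ∑ i, ∑ j, (ρ * (lam i ⊗ₖ mu j)).trace ^ 2
      = 4 * ((Fintype.card n : K) ^ 2 - 1) / (Fintype.card n : K) ^ 2
        - 2 * ((Fintype.card m : K) + Fintype.card n) / (Fintype.card m * Fintype.card n)
          * ∑ j, (ρ * (1 ⊗ₖ mu j)).trace ^ 2 := by
  obtain ⟨u, v, hρ⟩ := exists_eq_vecMulVec_of_isIdempotentElem hpure htr
  have hpurity := trace_partialTraceSnd_mul_self_of_vecMulVec u v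
  rw [← hρ] at hpurity
  have h₁ := h.trace_mul_self ρ.partialTraceSnd
  have h₂ := h'.trace_mul_self ρ.partialTraceFst
  have h₁₂ := h.trace_mul_self_kronecker h' ρ
  simp only [trace_partialTraceSnd, trace_partialTraceFst, htr, hpure.eq, trace_mul_kronecker_one,
    trace_mul_one_kronecker] at h₁ h₂ h₁₂ ⊢
  linear_combination (norm := skip) -4 * h₁₂ + 4 / (Fintype.card n : K) * (h₁ - h₂ - hpurity)
  field_simp [h.card_ne_zero, h'.card_ne_zero]
  ring

end IsBlochBasis

theorem Matrix.IsHermitian.kronecker {R m n : Type*} [CommSemiring R] [StarRing R]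
    {A : Matrix m m R} {B : Matrix n n R} (hA : A.IsHermitian) (hB : B.IsHermitian) :
    (A ⊗ₖ B).IsHermitian := by
  rw [IsHermitian, conjTranspose_kronecker, hA.eq, hB.eq]

theorem Matrix.IsHermitian.ofReal_re_trace_mul {n : Type*} [Fintype n] {A B : Matrix n n ℂ}
    (hA : A.IsHermitian) (hB : B.IsHermitian) : (((A * B).trace.re : ℝ) : ℂ) = (A * B).trace := by
  refine Complex.conj_eq_iff_re.mp ?_
  rw [starRingEnd_apply, ← trace_conjTranspose, conjTranspose_mul, hA.eq, hB.eq, trace_mul_comm]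

theorem bipartite_pure_correlation_identity
    (d₁ d₂ : ℕ)
    (lam1 : Fin (d₁ ^ 2 - 1) → Matrix (Fin d₁) (Fin d₁) ℂ)
    (lam2 : Fin (d₂ ^ 2 - 1) → Matrix (Fin d₂) (Fin d₂) ℂ)
    (h1herm : ∀ i, (lam1 i).IsHermitian)
    (h1tr : ∀ i, (lam1 i).trace = 0)
    (h1orth : ∀ i j, (lam1 i * lam1 j).trace = if i = j then 2 else 0)
    (h2herm : ∀ i, (lam2 i).IsHermitian)
    (h2tr : ∀ i, (lam2 i).trace = 0)
    (h2orth : ∀ i j, (lam2 i * lam2 j).trace = if i = j then 2 else 0)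
    (ρ : Matrix (Fin d₁ × Fin d₂) (Fin d₁ × Fin d₂) ℂ)
    (hρ : ρ.PosSemidef) (hρtr : ρ.trace = 1) (hpure : ρ * ρ = ρ) :
    ∑ i : Fin (d₁ ^ 2 - 1), ∑ j : Fin (d₂ ^ 2 - 1),
        (Complex.re ((ρ * (lam1 i ⊗ₖ lam2 j)).trace)) ^ 2
      = 4 * ((d₂ : ℝ) ^ 2 - 1) / (d₂ : ℝ) ^ 2 -
        (2 * ((d₁ : ℝ) + (d₂ : ℝ)) / ((d₁ : ℝ) * (d₂ : ℝ))) *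
          ∑ j : Fin (d₂ ^ 2 - 1),
            (Complex.re ((ρ * ((1 : Matrix (Fin d₁) (Fin d₁) ℂ) ⊗ₖ lam2 j)).trace)) ^ 2 := by
  have hd₁ : d₁ ≠ 0 := by rintro rfl; simp [trace] at hρtr
  have hd₂ : d₂ ≠ 0 := by rintro rfl; simp [trace] at hρtr
  have hB₁ : IsBlochBasis lam1 :=
    ⟨h1tr, h1orth, by simp [Nat.sub_add_cancel (Nat.one_le_pow _ _ (Nat.pos_of_ne_zero hd₁))]⟩
  have hB₂ : IsBlochBasis lam2 :=
    ⟨h2tr, h2orth, by simp [Nat.sub_add_cancel (Nat.one_le_pow _ _ (Nat.pos_of_ne_zero hd₂))]⟩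
  have key := hB₁.sum_sq_trace_mul_kronecker_of_isIdempotentElem hB₂ hpure hρtr
  simp only [Fintype.card_fin] at key
  apply Complex.ofReal_injective
  push_cast
  simp only [hρ.1.ofReal_re_trace_mul ((h1herm _).kronecker (h2herm _)),
    hρ.1.ofReal_re_trace_mul (isHermitian_one.kronecker (h2herm _))]
  exact key
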